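/- A multiset P = {x_0,...,x_{b^m−1}} ⊂ [0,1)^s is a (t,α,β,n,m,s)-net in base b if and only if ρ_α(D_{⌊βn⌋−t}(P)) ≥ ⌊βn⌋ − t + 1, where D_r(P) is the dual set of P with resolution r and ρ_α(Q) = min_{k ∈ Q \ {0}} μ_α(k) (with ρ_α(Q) = r+1 if Q ⊆ {0}). -/

import Mathlib

/-- The `i`-th base-`b` digit (`i ≥ 1`) of a real number `x ∈ [0,1)`. -/
noncomputable def rdigit (b : ℕ) (x : ℝ) (i : ℕ) : ℤ := ⌊x * (b : ℝ) ^ i⌋ % (b : ℤ)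

/-- The `k`-th `b`-adic Walsh function. -/
noncomputable def wal (b k : ℕ) (x : ℝ) : ℂ :=
  Complex.exp ((2 * Real.pi * Complex.I / (b : ℂ)) *
    ((∑ j ∈ Finset.range k, rdigit b x (j + 1) * ((k / b ^ j % b : ℕ) : ℤ) : ℤ) : ℂ))

/-- The `s`-dimensional `b`-adic Walsh function. -/
noncomputable def walVec (b : ℕ) {s : ℕ} (k : Fin s → ℕ) (x : Fin s → ℝ) : ℂ :=
  ∏ j, wal b (k j) (x j)

/-- Sum of the `α` largest elements of a finite set of naturals. -/
def topSum (α : ℕ) (T : Finset ℕ) : ℕ := ((T.sort (· ≤ ·)).reverse.take α).sum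

/-- The weight `μ_α(k)`: the sum of the `min(ν,α)` largest base-`b` digit positions of `k`. -/
def muNat (α b k : ℕ) : ℕ :=
  topSum α (((Finset.range k).filter (fun j => k / b ^ j % b ≠ 0)).image (fun j => j + 1))

/-- The weight `μ_α` of a vector `k ∈ ℕ₀^s`. -/
def muNatVec (α b : ℕ) {s : ℕ} (k : Fin s → ℕ) : ℕ := ∑ j, muNat α b (k j)

/-- `P` is a `(t,α,β,n,m,s)`-net in base `b`: every generalised elementary interval
`J(i_ν, a_ν)` whose weight `∑_j ∑_{l=1}^{min(ν_j,α)} i_{j,l}` is at most `βn - t` contains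
exactly `b^{m - |ν|₁}` points of `P`. -/
def IsNet (b t α : ℕ) (β : ℝ) (n m s : ℕ) (P : Fin (b ^ m) → Fin s → ℝ) : Prop :=
  ∀ I : Fin s → Finset (Fin n),
    ((∑ j, topSum α ((I j).image (fun i : Fin n => (i : ℕ) + 1)) : ℕ) : ℝ) ≤ β * n - t →
    ∀ a : Fin s → Fin n → Fin b,
      (Finset.univ.filter (fun h : Fin (b ^ m) =>
          ∀ j : Fin s, ∀ i ∈ I j, rdigit b (P h j) ((i : ℕ) + 1) = ((a j i : ℕ) : ℤ))).card
        * b ^ (∑ j, (I j).card) = b ^ m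

/-! Write `ψ` for `ZMod.stdAddChar`. If every `k j < b ^ n`, then
`walVec b k x = ψ (walshDigits b n k ⬝ᵥ pointDigits b n x)`: the Walsh functions are the characters
of the group of digit tables `Fin s × Fin n → ZMod b`. By orthogonality of characters, the digits
of the points are equidistributed on a set `S` of positions iff the character sums vanish for every
nonzero table supported on `S`. The net property asks for equidistribution on every position set
of weight at most `r = ⌊βn⌋ - t`. Since `μ_α(k)` is the weight of the digit support of `k` and the
weight is monotone, these conditions are exactly the vanishing of the Walsh sums for the nonzero `k`
with `μ_α(k) ≤ r`; `β ≤ 1` gives `r ≤ n`, so such `k` are captured by `n` digits.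
-/

open Finset

section TopSum

lemma topSum_succ (α : ℕ) {T : Finset ℕ} (hT : T.Nonempty) :
    topSum (α + 1) T = T.max' hT + topSum α (T.erase (T.max' hT)) := by
  have hsort : (T.sort (· ≤ ·)).reverse =
      T.max' hT :: ((T.erase (T.max' hT)).sort (· ≤ ·)).reverse := by
    refine List.SortedGT.eq_of_mem_iff (T.sortedLT_sort).reverse ?_ fun a => ?_
    · rw [List.sortedGT_iff_pairwise, List.pairwise_cons, ← List.sortedGT_iff_pairwise]
      refine ⟨fun a ha => ?_, (sortedLT_sort _).reverse⟩
      rw [List.mem_reverse, mem_sort] at ha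
      exact T.lt_max'_of_mem_erase_max' hT ha
    · simp only [List.mem_reverse, mem_sort, List.mem_cons, mem_erase]
      by_cases ha : a = T.max' hT
      · simp [ha, T.max'_mem hT]
      · simp [ha]
  simp [topSum, hsort]

lemma sum_le_topSum (α : ℕ) {S T : Finset ℕ} (hST : S ⊆ T) (hS : #S ≤ α) :
    ∑ x ∈ S, x ≤ topSum α T := by
  induction α generalizing S T with
  | zero => simp [card_eq_zero.mp (Nat.le_zero.mp hS)]
  | succ α ih =>
    rcases S.eq_empty_or_nonempty with rfl | hSne
    · simp
    have hT := hSne.mono hST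
    obtain ⟨y, hyS, hsub⟩ : ∃ y ∈ S, S.erase y ⊆ T.erase (T.max' hT) := by
      by_cases hM : T.max' hT ∈ S
      · exact ⟨_, hM, erase_subset_erase _ hST⟩
      · obtain ⟨y, hy⟩ := hSne
        refine ⟨y, hy, fun x hx => mem_erase.mpr ⟨?_, hST (mem_of_mem_erase hx)⟩⟩
        rintro rfl
        exact hM (mem_of_mem_erase hx)
    rw [topSum_succ α hT, ← add_sum_erase S _ hyS]
    exact add_le_add (T.le_max' y (hST hyS)) (ih hsub (by rw [card_erase_of_mem hyS]; omega))

lemma exists_subset_sum_eq_topSum (α : ℕ) (T : Finset ℕ) :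
    ∃ S ⊆ T, #S ≤ α ∧ ∑ x ∈ S, x = topSum α T := by
  set l := ((T.sort (· ≤ ·)).reverse.take α)
  have hl : l.Nodup := (List.nodup_reverse.mpr (T.sort_nodup _)).sublist (List.take_sublist _ _)
  refine ⟨l.toFinset, fun x hx => ?_, ?_, ?_⟩
  · rw [List.mem_toFinset] at hx
    exact (mem_sort _).mp (List.mem_reverse.mp (List.mem_of_mem_take hx))
  · rw [List.toFinset_card_of_nodup hl]
    exact List.length_take_le _ _
  · rw [List.sum_toFinset _ hl, List.map_id']
    rfl

lemma topSum_mono (α : ℕ) : Monotone (topSum α) := fun T T' h => by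
  obtain ⟨S, hS, hcard, heq⟩ := exists_subset_sum_eq_topSum α T
  exact heq ▸ sum_le_topSum α (hS.trans h) hcard

lemma le_topSum {α x : ℕ} {T : Finset ℕ} (hα : 1 ≤ α) (hx : x ∈ T) : x ≤ topSum α T := by
  simpa using sum_le_topSum α (singleton_subset_iff.mpr hx) (by simpa using hα)

end TopSum

lemma AddChar.map_sum_eq_prod {A M ι : Type*} [AddCommMonoid A] [CommMonoid M] (ψ : AddChar A M)
    (s : Finset ι) (f : ι → A) : ψ (∑ i ∈ s, f i) = ∏ i ∈ s, ψ (f i) := by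
  classical
  induction s using Finset.induction_on with
  | empty => simp
  | insert i s hi ih => rw [sum_insert hi, prod_insert hi, AddChar.map_add_eq_mul, ih]

section Orthogonality

variable {b : ℕ} [NeZero b] {ι : Type*} [Fintype ι] [DecidableEq ι]

def supportedOn (S : Finset ι) : Finset (ι → ZMod b) :=
  Fintype.piFinset fun i => if i ∈ S then univ else {0}

lemma mem_supportedOn {S : Finset ι} {c : ι → ZMod b} :
    c ∈ supportedOn S ↔ ∀ i ∉ S, c i = 0 := by
  simp only [supportedOn, Fintype.mem_piFinset]
  refine forall_congr' fun i => ?_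
  split_ifs with h <;> simp [h]

lemma sum_supportedOn_stdAddChar_dotProduct (S : Finset ι) (x : ι → ZMod b) :
    ∑ c ∈ supportedOn S, ZMod.stdAddChar (c ⬝ᵥ x) =
      if ∀ i ∈ S, x i = 0 then (b : ℂ) ^ #S else 0 := by
  have factor : ∀ i, ∑ y ∈ (if i ∈ S then univ else {0} : Finset (ZMod b)),
      ZMod.stdAddChar (y * x i) = if i ∈ S then (if x i = 0 then (b : ℂ) else 0) else 1 := by
    intro i
    by_cases hS : i ∈ S
    · rw [if_pos hS, if_pos hS, AddChar.sum_mulShift _ (ZMod.isPrimitive_stdAddChar b), ZMod.card]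
      push_cast
      rfl
    · rw [if_neg hS, if_neg hS, sum_singleton, zero_mul, AddChar.map_zero_eq_one]
  simp_rw [dotProduct, AddChar.map_sum_eq_prod, supportedOn]
  rw [← prod_univ_sum (fun i => if i ∈ S then univ else {0})
    (fun i y => ZMod.stdAddChar (y * x i))]
  simp_rw [factor]
  split_ifs with hx
  · rw [prod_ite_mem, univ_inter, prod_congr rfl fun i hi => if_pos (hx i hi), prod_const]
  · obtain ⟨i, hi, hxi⟩ := not_forall₂.mp hx
    exact prod_eq_zero (mem_univ i) (by simp [hi, hxi])

end Orthogonality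

section Weyl

variable {b : ℕ} [NeZero b] {ι H : Type*} [Fintype ι] [DecidableEq ι] [Fintype H]

def EquidistributedOn (f : H → ι → ZMod b) (S : Finset ι) : Prop :=
  ∀ a : ι → ZMod b, #{h | ∀ i ∈ S, f h i = a i} * b ^ #S = Fintype.card H

lemma card_filter_mul_pow_eq_sum_stdAddChar (f : H → ι → ZMod b) (S : Finset ι) (a : ι → ZMod b) :
    (#{h | ∀ i ∈ S, f h i = a i} : ℂ) * b ^ #S =
      ∑ c ∈ supportedOn S, ZMod.stdAddChar (-(c ⬝ᵥ a)) * ∑ h, ZMod.stdAddChar (c ⬝ᵥ f h) := by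
  calc (#{h | ∀ i ∈ S, f h i = a i} : ℂ) * b ^ #S
      = ∑ h, if ∀ i ∈ S, (f h - a) i = 0 then (b : ℂ) ^ #S else 0 := by
        simp [sum_ite, sub_eq_zero]
    _ = ∑ h, ∑ c ∈ supportedOn S, ZMod.stdAddChar (c ⬝ᵥ (f h - a)) := by
        simp_rw [sum_supportedOn_stdAddChar_dotProduct]
    _ = _ := by
        rw [sum_comm]
        simp_rw [mul_sum, dotProduct_sub, sub_eq_neg_add, AddChar.map_add_eq_mul]

lemma piecewise_mem_supportedOn (S : Finset ι) (x : ι → ZMod b) :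
    S.piecewise x 0 ∈ supportedOn S :=
  mem_supportedOn.mpr fun _ hi => S.piecewise_eq_of_notMem _ _ hi

lemma dotProduct_piecewise {S : Finset ι} {c : ι → ZMod b} (hc : c ∈ supportedOn S)
    (x : ι → ZMod b) : c ⬝ᵥ S.piecewise x 0 = c ⬝ᵥ x := by
  refine sum_congr rfl fun i _ => ?_
  by_cases hi : i ∈ S
  · rw [S.piecewise_eq_of_mem _ _ hi]
  · rw [mem_supportedOn.mp hc i hi, zero_mul, zero_mul]

lemma piecewise_eq_iff {S : Finset ι} {a : ι → ZMod b} (ha : a ∈ supportedOn S)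
    (x : ι → ZMod b) : S.piecewise x 0 = a ↔ ∀ i ∈ S, x i = a i := by
  refine ⟨fun h i hi => by rw [← h, S.piecewise_eq_of_mem _ _ hi], fun h => funext fun i => ?_⟩
  by_cases hi : i ∈ S
  · rw [S.piecewise_eq_of_mem _ _ hi, h i hi]
  · rw [S.piecewise_eq_of_notMem _ _ hi, mem_supportedOn.mp ha i hi, Pi.zero_apply]

variable {f : H → ι → ZMod b} {S : Finset ι}

-- Group the points by their digits on `S`: every pattern occurs equally often, and the sum of a
-- nontrivial character over all patterns vanishes.
theorem EquidistributedOn.sum_stdAddChar_eq_zero (hf : EquidistributedOn f S) {c : ι → ZMod b}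
    (hc : c ∈ supportedOn S) (hc0 : c ≠ 0) : ∑ h, ZMod.stdAddChar (c ⬝ᵥ f h) = 0 := by
  have hc' : ¬ ∀ i ∈ S, c i = 0 := fun h0 =>
    hc0 (funext fun i => if hi : i ∈ S then h0 i hi else mem_supportedOn.mp hc i hi)
  have hfiber : ∀ a ∈ supportedOn S,
      (#{h | S.piecewise (f h) 0 = a} : ℂ) * b ^ #S = Fintype.card H := fun a ha => by
    simp_rw [piecewise_eq_iff ha]
    exact_mod_cast hf a
  refine (mul_eq_zero.mp ?_).resolve_left (pow_ne_zero #S (Nat.cast_ne_zero.mpr (NeZero.ne b)))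
  calc (b : ℂ) ^ #S * ∑ h, ZMod.stdAddChar (c ⬝ᵥ f h)
      = ∑ a ∈ supportedOn S,
          (#{h | S.piecewise (f h) 0 = a} : ℂ) * b ^ #S * ZMod.stdAddChar (a ⬝ᵥ c) := by
        simp_rw [← dotProduct_piecewise hc (f _)]
        rw [← sum_fiberwise_of_maps_to' (fun h _ => piecewise_mem_supportedOn S (f h))
          fun a => ZMod.stdAddChar (c ⬝ᵥ a), mul_sum]
        refine sum_congr rfl fun a _ => ?_
        rw [sum_const, nsmul_eq_mul, dotProduct_comm]
        ring
    _ = Fintype.card H * ∑ a ∈ supportedOn S, ZMod.stdAddChar (a ⬝ᵥ c) := by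
        rw [mul_sum]
        exact sum_congr rfl fun a ha => by rw [hfiber a ha]
    _ = 0 := by rw [sum_supportedOn_stdAddChar_dotProduct, if_neg hc', mul_zero]

theorem equidistributedOn_of_sum_stdAddChar_eq_zero
    (hf : ∀ c ∈ supportedOn S, c ≠ 0 → ∑ h, ZMod.stdAddChar (c ⬝ᵥ f h) = 0) :
    EquidistributedOn f S := fun a => by
  have hzero : (0 : ι → ZMod b) ∈ supportedOn S := mem_supportedOn.mpr fun _ _ => rfl
  have := card_filter_mul_pow_eq_sum_stdAddChar f S a
  rw [sum_eq_single_of_mem 0 hzero fun c hc hc0 => by rw [hf c hc hc0, mul_zero]] at this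
  simp only [zero_dotProduct, neg_zero, AddChar.map_zero_eq_one, sum_const, card_univ,
    nsmul_eq_mul, mul_one, one_mul] at this
  exact_mod_cast this

theorem equidistributedOn_iff_sum_stdAddChar_eq_zero :
    EquidistributedOn f S ↔
      ∀ c ∈ supportedOn S, c ≠ 0 → ∑ h, ZMod.stdAddChar (c ⬝ᵥ f h) = 0 :=
  ⟨fun hf _ hc hc0 => hf.sum_stdAddChar_eq_zero hc hc0,
    equidistributedOn_of_sum_stdAddChar_eq_zero⟩

end Weyl

section Digits

variable {b : ℕ}

-- Position `i` pairs the coefficient of `b ^ i` in `k` with the `(i + 1)`-th digit of `x`,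
-- as in `wal`.
def digitVec (b n k : ℕ) : Fin n → ZMod b := fun i => ((k / b ^ (i : ℕ) % b : ℕ) : ZMod b)

noncomputable def rdigitVec (b n : ℕ) (x : ℝ) : Fin n → ZMod b :=
  fun i => (rdigit b x (i + 1) : ZMod b)

lemma digitVec_apply_eq_zero_iff [NeZero b] {n k : ℕ} {i : Fin n} :
    digitVec b n k i = 0 ↔ k / b ^ (i : ℕ) % b = 0 := by
  rw [digitVec, ← ZMod.val_eq_zero, ZMod.val_cast_of_lt (Nat.mod_lt _ (NeZero.pos b))]

lemma rdigit_eq_natCast_iff {x : ℝ} {i v : ℕ} (hv : v < b) :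
    rdigit b x i = v ↔ (rdigit b x i : ZMod b) = v := by
  rw [← Int.cast_natCast (R := ZMod b), ZMod.intCast_eq_intCast_iff', rdigit, Int.emod_emod,
    Int.emod_eq_of_lt (Int.natCast_nonneg v) (by exact_mod_cast hv)]

lemma pow_le_of_digit_ne_zero {k j : ℕ} (h : k / b ^ j % b ≠ 0) : b ^ j ≤ k := by
  by_contra hlt
  exact h (by rw [Nat.div_eq_of_lt (not_le.mp hlt), Nat.zero_mod])

lemma eq_zero_of_digits_eq_zero {n k : ℕ} (hk : k < b ^ n) (h : ∀ i < n, k / b ^ i % b = 0) :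
    k = 0 := by
  have := finFunctionFinEquiv_apply (finFunctionFinEquiv.symm (⟨k, hk⟩ : Fin (b ^ n)))
  simpa [h] using this

lemma lt_pow_of_digits_eq_zero (hb : 0 < b) {n r k : ℕ} (hk : k < b ^ n)
    (h : ∀ i, r ≤ i → i < n → k / b ^ i % b = 0) : k < b ^ r := by
  rcases le_or_gt n r with hnr | hrn
  · exact hk.trans_le (Nat.pow_le_pow_right hb hnr)
  · have hquot : k / b ^ r < b ^ (n - r) := by
      rw [Nat.div_lt_iff_lt_mul (by positivity), ← pow_add, Nat.sub_add_cancel hrn.le]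
      exact hk
    have := eq_zero_of_digits_eq_zero hquot fun i hi => by
      rw [Nat.div_div_eq_div_mul, ← pow_add]
      exact h _ (Nat.le_add_right r i) (by omega)
    rwa [Nat.div_eq_zero_iff_lt (by positivity)] at this

lemma exists_digitVec_eq [NeZero b] {n : ℕ} (d : Fin n → ZMod b) :
    ∃ k < b ^ n, digitVec b n k = d := by
  set g : Fin n → Fin b := fun i => ⟨(d i).val, ZMod.val_lt (d i)⟩
  refine ⟨finFunctionFinEquiv g, (finFunctionFinEquiv g).isLt, funext fun i => ?_⟩
  have hdigit : (finFunctionFinEquiv g : ℕ) / b ^ (i : ℕ) % b = (d i).val := by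
    rw [← finFunctionFinEquiv_symm_apply_val, finFunctionFinEquiv.symm_apply_apply]
  rw [digitVec, hdigit, ZMod.natCast_zmod_val]

lemma digitVec_eq_zero_iff [NeZero b] {n k : ℕ} (hk : k < b ^ n) :
    digitVec b n k = 0 ↔ k = 0 := by
  refine ⟨fun h => eq_zero_of_digits_eq_zero hk fun i hi => ?_, fun h => ?_⟩
  · exact digitVec_apply_eq_zero_iff.mp (congrFun h ⟨i, hi⟩)
  · subst h
    funext i
    simp [digitVec]

end Digits

section Walsh

variable {b : ℕ}

lemma filter_range_digit_ne_zero (hb : 1 < b) {n k : ℕ} (hk : k < b ^ n) :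
    {j ∈ range k | k / b ^ j % b ≠ 0} = {j ∈ range n | k / b ^ j % b ≠ 0} := by
  ext j
  simp only [mem_filter, mem_range]
  constructor <;> rintro ⟨-, hd⟩ <;> refine ⟨?_, hd⟩
  · exact (Nat.pow_lt_pow_iff_right hb).mp ((pow_le_of_digit_ne_zero hd).trans_lt hk)
  · exact (Nat.lt_pow_self hb).trans_le (pow_le_of_digit_ne_zero hd)

variable [NeZero b]

lemma muNat_eq_topSum_digitVec (hb : 1 < b) (α : ℕ) {n k : ℕ} (hk : k < b ^ n) :
    muNat α b k = topSum α (({i | digitVec b n k i ≠ 0} : Finset (Fin n)).image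
      fun i : Fin n => (i : ℕ) + 1) := by
  rw [muNat, filter_range_digit_ne_zero hb hk]
  congr 1
  ext x
  simp only [mem_image, mem_filter, mem_range, mem_univ, true_and, ne_eq,
    digitVec_apply_eq_zero_iff, Fin.exists_iff]
  exact exists_congr fun j => by tauto

lemma wal_eq_stdAddChar (hb : 1 < b) {n k : ℕ} (hk : k < b ^ n) (x : ℝ) :
    wal b k x = ZMod.stdAddChar (digitVec b n k ⬝ᵥ rdigitVec b n x) := by
  have hdot : digitVec b n k ⬝ᵥ rdigitVec b n x =
      ((∑ j ∈ range k, rdigit b x (j + 1) * ((k / b ^ j % b : ℕ) : ℤ) : ℤ) : ZMod b) := by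
    have hvanish : ∀ j ∈ range k ∪ range n, (rdigit b x (j + 1) : ZMod b) *
        ((k / b ^ j % b : ℕ) : ZMod b) ≠ 0 → k / b ^ j % b ≠ 0 := fun j _ hj h0 =>
      hj (by rw [h0, Nat.cast_zero, mul_zero])
    simp only [Int.cast_sum, Int.cast_mul, Int.cast_natCast, dotProduct, digitVec, rdigitVec]
    rw [Fin.sum_univ_eq_sum_range (fun j =>
        ((k / b ^ j % b : ℕ) : ZMod b) * (rdigit b x (j + 1) : ZMod b))]
    conv_rhs => rw [← sum_filter_of_ne fun j hj => hvanish j (mem_union_left _ hj),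
      filter_range_digit_ne_zero hb hk,
      sum_filter_of_ne fun j hj => hvanish j (mem_union_right _ hj)]
    exact sum_congr rfl fun j _ => mul_comm _ _
  rw [hdot, ZMod.stdAddChar_coe, wal]
  congr 1
  ring

end Walsh

section Vectors

variable {b n s : ℕ}

def walshDigits (b n : ℕ) (k : Fin s → ℕ) : Fin s × Fin n → ZMod b :=
  fun p => digitVec b n (k p.1) p.2

noncomputable def pointDigits (b n : ℕ) (x : Fin s → ℝ) : Fin s × Fin n → ZMod b :=
  fun p => rdigitVec b n (x p.1) p.2

variable [NeZero b]

lemma walVec_eq_stdAddChar (hb : 1 < b) {k : Fin s → ℕ} (hk : ∀ j, k j < b ^ n)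
    (x : Fin s → ℝ) :
    walVec b k x = ZMod.stdAddChar (walshDigits b n k ⬝ᵥ pointDigits b n x) := by
  rw [walVec, dotProduct, Fintype.sum_prod_type, AddChar.map_sum_eq_prod]
  exact prod_congr rfl fun j _ => wal_eq_stdAddChar hb (hk j) (x j)

lemma exists_walshDigits_eq (c : Fin s × Fin n → ZMod b) :
    ∃ k : Fin s → ℕ, (∀ j, k j < b ^ n) ∧ walshDigits b n k = c := by
  choose k hk hdigits using fun j => exists_digitVec_eq fun i => c (j, i)
  exact ⟨k, hk, funext fun p => congrFun (hdigits p.1) p.2⟩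

lemma walshDigits_eq_zero_iff {k : Fin s → ℕ} (hk : ∀ j, k j < b ^ n) :
    walshDigits b n k = 0 ↔ k = 0 := by
  refine ⟨fun h => funext fun j => (digitVec_eq_zero_iff (hk j)).mp
    (funext fun i => congrFun h (j, i)), ?_⟩
  rintro rfl
  funext p
  simp [walshDigits, digitVec]

lemma card_filter_positions (I : Fin s → Finset (Fin n)) :
    #{p : Fin s × Fin n | p.2 ∈ I p.1} = ∑ j, #(I j) := by
  rw [card_filter, Fintype.sum_prod_type]
  exact sum_congr rfl fun j _ => by simp

lemma forall_card_rdigit_eq_iff_equidistributedOn {H : Type*} [Fintype H]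
    (P : H → Fin s → ℝ) (I : Fin s → Finset (Fin n)) :
    (∀ a : Fin s → Fin n → Fin b,
      #{h | ∀ j, ∀ i ∈ I j, rdigit b (P h j) ((i : ℕ) + 1) = ((a j i : ℕ) : ℤ)}
        * b ^ (∑ j, #(I j)) = Fintype.card H) ↔
      EquidistributedOn (fun h => pointDigits b n (P h)) {p | p.2 ∈ I p.1} := by
  have hcast : Function.Surjective
      fun (a : Fin s → Fin n → Fin b) (p : Fin s × Fin n) => ((a p.1 p.2 : ℕ) : ZMod b) :=
    fun a' => ⟨fun j i => ⟨(a' (j, i)).val, ZMod.val_lt _⟩,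
      funext fun p => ZMod.natCast_zmod_val (a' p)⟩
  rw [EquidistributedOn, hcast.forall, card_filter_positions]
  refine forall_congr' fun a => ?_
  simp only [mem_filter, mem_univ, true_and, Prod.forall, pointDigits, rdigitVec,
    rdigit_eq_natCast_iff (a _ _).isLt]

theorem forall_card_rdigit_eq_iff_sum_walVec_eq_zero (hb : 1 < b) {H : Type*} [Fintype H]
    (P : H → Fin s → ℝ) (I : Fin s → Finset (Fin n)) :
    (∀ a : Fin s → Fin n → Fin b,
      #{h | ∀ j, ∀ i ∈ I j, rdigit b (P h j) ((i : ℕ) + 1) = ((a j i : ℕ) : ℤ)}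
        * b ^ (∑ j, #(I j)) = Fintype.card H) ↔
      ∀ k : Fin s → ℕ, (∀ j, k j < b ^ n) → k ≠ 0 →
        (∀ j i, digitVec b n (k j) i ≠ 0 → i ∈ I j) → ∑ h, walVec b k (P h) = 0 := by
  rw [forall_card_rdigit_eq_iff_equidistributedOn, equidistributedOn_iff_sum_stdAddChar_eq_zero]
  constructor
  · intro hchar k hk hk0 hsupp
    simp_rw [walVec_eq_stdAddChar hb hk]
    refine hchar _ (mem_supportedOn.mpr fun p hp => ?_) ((walshDigits_eq_zero_iff hk).not.mpr hk0)
    by_contra hne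
    exact hp (by simpa using hsupp p.1 p.2 hne)
  · intro hwal c hc hc0
    obtain ⟨k, hk, rfl⟩ := exists_walshDigits_eq c
    simp_rw [← walVec_eq_stdAddChar hb hk]
    refine hwal k hk (fun h0 => hc0 ((walshDigits_eq_zero_iff hk).mpr h0)) fun j i hi => ?_
    by_contra hnot
    exact hi (mem_supportedOn.mp hc (j, i) (by simpa using hnot))

end Vectors

lemma natCast_le_sub_iff_le_floor_sub {y : ℝ} {t : ℕ} (ht : (t : ℝ) ≤ y) (w : ℕ) :
    (w : ℝ) ≤ y - t ↔ w ≤ ⌊y⌋.toNat - t := by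
  have hy : 0 ≤ y := (Nat.cast_nonneg t).trans ht
  rw [Int.floor_toNat, le_sub_iff_add_le, ← Nat.cast_add, ← Nat.le_floor_iff hy]
  have := Nat.le_floor ht
  omega

lemma floor_toNat_sub_le {y : ℝ} {n : ℕ} (hy : y ≤ n) (t : ℕ) : ⌊y⌋.toNat - t ≤ n := by
  rw [Int.floor_toNat]
  exact (Nat.sub_le _ _).trans (Nat.floor_le_of_le hy)

section Support

variable {b : ℕ} [NeZero b] {n k : ℕ} {T : Finset (Fin n)}

lemma lt_pow_of_digitVec_support (hk : k < b ^ n) (hsupp : ∀ i, digitVec b n k i ≠ 0 → i ∈ T)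
    {r : ℕ} (hT : ∀ i ∈ T, (i : ℕ) < r) : k < b ^ r :=
  lt_pow_of_digits_eq_zero (NeZero.pos b) hk fun i hri hin => by
    by_contra hd
    have := hT _ (hsupp ⟨i, hin⟩ (digitVec_apply_eq_zero_iff.not.mpr hd))
    simp only at this
    omega

lemma muNat_le_topSum_of_digitVec_support (hb : 1 < b) (α : ℕ) (hk : k < b ^ n)
    (hsupp : ∀ i, digitVec b n k i ≠ 0 → i ∈ T) :
    muNat α b k ≤ topSum α (T.image fun i : Fin n => (i : ℕ) + 1) :=
  (muNat_eq_topSum_digitVec hb α hk).trans_le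
    (topSum_mono α (image_subset_image fun i hi => hsupp i (by simpa using hi)))

lemma lt_of_mem_of_sum_topSum_le {s α r : ℕ} (hα : 1 ≤ α) {I : Fin s → Finset (Fin n)}
    (hI : ∑ j, topSum α ((I j).image fun i : Fin n => (i : ℕ) + 1) ≤ r) {j : Fin s} {i : Fin n}
    (hi : i ∈ I j) : (i : ℕ) < r :=
  (le_topSum hα (mem_image_of_mem (fun i : Fin n => (i : ℕ) + 1) hi)).trans
    ((single_le_sum (fun _ _ => Nat.zero_le _) (mem_univ j)).trans hI)

end Support

theorem net_iff_dual_weight_general (b t α : ℕ) (β : ℝ) (n m s : ℕ) (hb : 2 ≤ b) (hα : 1 ≤ α)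
    (hβ1 : β ≤ min 1 (α * m / n)) (ht : (t : ℝ) ≤ β * n)
    (P : Fin (b ^ m) → Fin s → ℝ) :
    IsNet b t α β n m s P ↔
      ∀ k : Fin s → ℕ, (∀ j, k j < b ^ ((⌊β * (n : ℝ)⌋.toNat - t))) → k ≠ 0 →
        (∑ h, walVec b k (P h)) ≠ 0 →
        (⌊β * (n : ℝ)⌋.toNat - t) + 1 ≤ muNatVec α b k := by
  have : NeZero b := ⟨by omega⟩
  set r := ⌊β * (n : ℝ)⌋.toNat - t
  have hweight : ∀ w : ℕ, (w : ℝ) ≤ β * n - t ↔ w ≤ r := natCast_le_sub_iff_le_floor_sub ht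
  have hrn : r ≤ n := floor_toNat_sub_le (mul_le_of_le_one_left (Nat.cast_nonneg n)
    (hβ1.trans (by exact_mod_cast min_le_left _ _))) t
  have hcrit := fun I : Fin s → Finset (Fin n) =>
    Fintype.card_fin (b ^ m) ▸ forall_card_rdigit_eq_iff_sum_walVec_eq_zero hb P I
  constructor
  · intro hnet k hk hk0 hsum
    by_contra! hμ
    have hkn : ∀ j, k j < b ^ n := fun j => (hk j).trans_le (Nat.pow_le_pow_right (by omega) hrn)
    let I : Fin s → Finset (Fin n) := fun j => {i | digitVec b n (k j) i ≠ 0}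
    have hI : muNatVec α b k = ∑ j, topSum α ((I j).image fun i : Fin n => (i : ℕ) + 1) :=
      sum_congr rfl fun j _ => muNat_eq_topSum_digitVec hb α (hkn j)
    exact hsum ((hcrit I).mp (hnet I ((hweight _).mpr (by omega))) k hkn hk0
      fun j i hi => by simpa [I] using hi)
  · intro hdual I hI
    refine (hcrit I).mpr fun k hkn hk0 hsupp => by_contra fun hsum => ?_
    have hw := (hweight _).mp hI
    have hμ : muNatVec α b k ≤ r := (sum_le_sum fun j _ =>
      muNat_le_topSum_of_digitVec_support hb α (hkn j) (hsupp j)).trans hw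
    have := hdual k (fun j => lt_pow_of_digitVec_support (hkn j) (hsupp j)
      fun i hi => lt_of_mem_of_sum_topSum_le hα hw hi) hk0 hsum
    omega

/-- `P` is a `(t,α,β,n,m,s)`-net in base `b` if and only if
`ρ_α(D_{⌊βn⌋-t}(P)) ≥ ⌊βn⌋ - t + 1`: every nonzero `k ∈ {0,…,b^r-1}^s` (with `r = ⌊βn⌋ - t`)
whose Walsh coefficient sum over `P` does not vanish has weight `μ_α(k) ≥ r + 1`. -/
theorem net_iff_dual_weight (b t α : ℕ) (β : ℝ) (n m s : ℕ) (hb : 2 ≤ b) (hn : 1 ≤ n)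
    (hm : 1 ≤ m) (hs : 1 ≤ s) (hα : 1 ≤ α) (hβ0 : 0 < β)
    (hβ1 : β ≤ min 1 (α * m / n)) (ht : (t : ℝ) ≤ β * n)
    (P : Fin (b ^ m) → Fin s → ℝ) (hP : ∀ h j, P h j ∈ Set.Ico (0 : ℝ) 1) :
    IsNet b t α β n m s P ↔
      ∀ k : Fin s → ℕ, (∀ j, k j < b ^ ((⌊β * (n : ℝ)⌋.toNat - t))) → k ≠ 0 →
        (∑ h, walVec b k (P h)) ≠ 0 →
        (⌊β * (n : ℝ)⌋.toNat - t) + 1 ≤ muNatVec α b k :=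
  net_iff_dual_weight_general b t α β n m s hb hα hβ1 ht P
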